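/- arXiv:1607.06372 — 2 statements merged into one kernel-verified Lean document; each statement's English description precedes it below -/
import Mathlib

section
/- Let γ, D, ζ > 0 and κ ∈ (0, ζ²). Define σ_s² = ζ²/(2(ζ²/κ−1)), σ_a² = ζ²/(2ζ²/κ−1), C_s = γD·ζ³/(2σ_s²+ζ²)^{3/2} and C_a = γD·ζ²/(σ_a²+ζ²). Then C_a > C_s > 0. -/
/-!
Put `u = κ / ζ² ∈ (0, 1)`. Both denominators are multiples of `ζ²`, and after cancelling the
powers of `ζ` one finds `C_s = γ D (1 - u)^{3/2}` and `C_a = γ D (1 - u/2)`. Since `0 < 1 - u < 1`,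
`(1 - u)^{3/2} < 1 - u < 1 - u/2`.
-/

open Real

lemma sq_rpow_three_halves {ζ : ℝ} (hζ : 0 ≤ ζ) : (ζ ^ 2) ^ ((3 : ℝ) / 2) = ζ ^ 3 := by
  rw [← rpow_natCast ζ 2, ← rpow_mul hζ]
  norm_num

lemma pow_three_div_rpow_three_halves {ζ t : ℝ} (hζ : 0 < ζ) (ht : 0 ≤ t) :
    ζ ^ 3 / (ζ ^ 2 / t) ^ ((3 : ℝ) / 2) = t ^ ((3 : ℝ) / 2) := by
  rw [div_rpow (by positivity) ht, sq_rpow_three_halves hζ.le, div_div_cancel₀ (by positivity)]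

lemma symmetric_denominator_eq {ζ κ : ℝ} (hζ : ζ ≠ 0) (hκ : κ ≠ 0) (hκζ : κ ≠ ζ ^ 2) :
    2 * (ζ ^ 2 / (2 * (ζ ^ 2 / κ - 1))) + ζ ^ 2 = ζ ^ 2 / (1 - κ / ζ ^ 2) := by
  have hgap : ζ ^ 2 - κ ≠ 0 := sub_ne_zero.mpr hκζ.symm
  rw [div_sub_one hκ, one_sub_div (pow_ne_zero 2 hζ)]
  field_simp
  ring

lemma symmetric_ratio_eq {ζ κ : ℝ} (hζ : 0 < ζ) (hκ : κ ≠ 0) (hκζ : κ < ζ ^ 2) :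
    ζ ^ 3 / (2 * (ζ ^ 2 / (2 * (ζ ^ 2 / κ - 1))) + ζ ^ 2) ^ ((3 : ℝ) / 2)
      = (1 - κ / ζ ^ 2) ^ ((3 : ℝ) / 2) := by
  have hu : κ / ζ ^ 2 < 1 := (div_lt_one (by positivity)).mpr hκζ
  rw [symmetric_denominator_eq hζ.ne' hκ hκζ.ne, pow_three_div_rpow_three_halves hζ (by linarith)]

lemma asymmetric_ratio_eq {ζ κ : ℝ} (hζ : ζ ≠ 0) (hκ : κ ≠ 0) (hκζ : κ ≠ 2 * ζ ^ 2) :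
    ζ ^ 2 / (ζ ^ 2 / (2 * ζ ^ 2 / κ - 1) + ζ ^ 2) = 1 - κ / ζ ^ 2 / 2 := by
  have hgap : 2 * ζ ^ 2 - κ ≠ 0 := sub_ne_zero.mpr hκζ.symm
  rw [div_sub_one hκ, div_div_eq_mul_div, div_add' _ _ _ hgap, div_div_eq_mul_div]
  field_simp
  ring

lemma rpow_three_halves_lt_one_sub_half {u : ℝ} (hu₀ : 0 < u) (hu₁ : u < 1) :
    (1 - u) ^ ((3 : ℝ) / 2) < 1 - u / 2 :=
  calc (1 - u) ^ ((3 : ℝ) / 2) < (1 - u) ^ (1 : ℝ) :=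
        rpow_lt_rpow_of_exponent_gt (by linarith) (by linarith) (by norm_num)
    _ = 1 - u := rpow_one _
    _ < 1 - u / 2 := by linarith

theorem Ca_gt_Cs_gt_zero (γ D ζ κ : ℝ) (hγ : 0 < γ) (hD : 0 < D) (hζ : 0 < ζ)
    (hκ : 0 < κ) (hκζ : κ < ζ^2) :
    γ * D * ζ^2 / (ζ^2 / (2 * ζ^2 / κ - 1) + ζ^2) >
        γ * D * ζ^3 / (2 * (ζ^2 / (2 * (ζ^2 / κ - 1))) + ζ^2) ^ ((3 : ℝ) / 2) ∧
      γ * D * ζ^3 / (2 * (ζ^2 / (2 * (ζ^2 / κ - 1))) + ζ^2) ^ ((3 : ℝ) / 2) > 0 := by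
  have hu₀ : 0 < κ / ζ ^ 2 := by positivity
  have hu₁ : κ / ζ ^ 2 < 1 := (div_lt_one (by positivity)).mpr hκζ
  have hκζ₂ : κ ≠ 2 * ζ ^ 2 := by nlinarith
  rw [mul_div_assoc (γ * D) (ζ ^ 2), mul_div_assoc (γ * D) (ζ ^ 3),
    symmetric_ratio_eq hζ hκ.ne' hκζ, asymmetric_ratio_eq hζ.ne' hκ.ne' hκζ₂]
  exact ⟨mul_lt_mul_of_pos_left (rpow_three_halves_lt_one_sub_half hu₀ hu₁) (mul_pos hγ hD),
    by positivity⟩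
end

section
/- For σ, ζ > 0, the double integral I₂ = ∫∫_{ℝ²} (ψ/σ²)·(φ−ψ)·G_ζ(φ−ψ)·F_{σ,0}(ψ)·F_{σ,0}(φ) dφ dψ equals −ζ³/(2σ²+ζ²)^{3/2}, where G_ζ(u) = exp(−u²/(2ζ²)). -/
/-!
Completing the square in `φ`, the product of the three Gaussian factors is
`exp (-B ψ²) · exp (-a (φ - σ²ψ/(σ²+ζ²))²)` with `a = (σ²+ζ²)/(2σ²ζ²)` and
`B = (2σ²+ζ²)/(2σ²(σ²+ζ²))`. The inner integral is then a shifted first moment, equal to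
`-ζ²ψ/(σ²+ζ²) · √(π/a)` times the `ψ`-factors, so the outer integral is a multiple of the second
moment `∫ ψ² exp (-B ψ²) = √(π/B)/(2B)`; simplifying the constant gives `-ζ³/(2σ²+ζ²)^{3/2}`.
-/

open MeasureTheory

/-- Scaled Gaussian interaction kernel. -/
noncomputable def Gzeta (ζ u : ℝ) : ℝ := Real.exp (-u^2 / (2 * ζ^2))

/-- Gaussian density with mean `μ` and standard deviation `s`. -/
noncomputable def gaussF (s μ φ : ℝ) : ℝ :=
  (1 / (Real.sqrt (2 * Real.pi) * s)) * Real.exp (-(φ - μ)^2 / (2 * s^2))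

open Real

section GaussianMoments

variable {b : ℝ}

theorem integral_mul_exp_neg_mul_sq (b : ℝ) : ∫ x : ℝ, x * exp (-b * x ^ 2) = 0 := by
  have h := integral_neg_eq_self (fun x : ℝ => x * exp (-b * x ^ 2)) volume
  simp only [neg_sq, neg_mul, integral_neg] at h
  simp only [neg_mul]
  linarith

theorem integral_sub_mul_exp_neg_mul_sq_sub (hb : 0 < b) (m c : ℝ) :
    ∫ x : ℝ, (x - c) * exp (-b * (x - m) ^ 2) = (m - c) * √(π / b) := by
  rw [← integral_add_right_eq_self _ m]
  simp only [add_sub_cancel_right, add_sub_assoc, add_mul]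
  rw [integral_add (integrable_mul_exp_neg_mul_sq hb)
      ((integrable_exp_neg_mul_sq hb).const_mul _),
    integral_mul_exp_neg_mul_sq, integral_const_mul, integral_gaussian, zero_add]

theorem integral_sq_mul_exp_neg_mul_sq (hb : 0 < b) :
    ∫ x : ℝ, x ^ 2 * exp (-b * x ^ 2) = √(π / b) / (2 * b) := by
  set v : ℝ → ℝ := fun x => -exp (-b * x ^ 2) / (2 * b)
  have hv : ∀ x, HasDerivAt v (x * exp (-b * x ^ 2)) x := fun x => by
    refine (((hasDerivAt_pow 2 x).const_mul (-b)).exp.neg.div_const (2 * b)).congr_deriv ?_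
    field_simp
    ring
  have key := integral_mul_deriv_eq_deriv_mul_of_integrable (u := id) (v := v)
    (fun x _ => hasDerivAt_id x) (fun x _ => hv x)
    ((integrable_rpow_mul_exp_neg_mul_sq hb (s := 2) (by norm_num)).congr
      (.of_forall fun x => by simp; ring))
    (((integrable_exp_neg_mul_sq hb).neg.div_const (2 * b)).congr (.of_forall fun x => by simp [v]))
    (((integrable_mul_exp_neg_mul_sq hb).neg.div_const (2 * b)).congr
      (.of_forall fun x => by simp [v]; ring))
  simp only [v, id, one_mul, integral_div, integral_neg, integral_gaussian] at key
  rw [neg_div, neg_neg] at key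
  rw [← key]
  congr 1 with x
  ring

end GaussianMoments

section I2

variable {σ ζ : ℝ}

theorem gaussian_exponent_complete_square (hσ : σ ≠ 0) (hζ : ζ ≠ 0) (ψ φ : ℝ) :
    -(φ - ψ) ^ 2 / (2 * ζ ^ 2) + (-ψ ^ 2 / (2 * σ ^ 2) + -φ ^ 2 / (2 * σ ^ 2)) =
      -((2 * σ ^ 2 + ζ ^ 2) / (2 * σ ^ 2 * (σ ^ 2 + ζ ^ 2))) * ψ ^ 2 +
        -((σ ^ 2 + ζ ^ 2) / (2 * σ ^ 2 * ζ ^ 2)) * (φ - σ ^ 2 * ψ / (σ ^ 2 + ζ ^ 2)) ^ 2 := by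
  have hT : σ ^ 2 + ζ ^ 2 ≠ 0 := by positivity
  field_simp
  ring

theorem I2_integrand_eq (hσ : σ ≠ 0) (hζ : ζ ≠ 0) (ψ φ : ℝ) :
    (ψ / σ ^ 2) * (φ - ψ) * Gzeta ζ (φ - ψ) * gaussF σ 0 ψ * gaussF σ 0 φ =
      ψ / (2 * π * σ ^ 4) * exp (-((2 * σ ^ 2 + ζ ^ 2) / (2 * σ ^ 2 * (σ ^ 2 + ζ ^ 2))) * ψ ^ 2) *
        ((φ - ψ) * exp (-((σ ^ 2 + ζ ^ 2) / (2 * σ ^ 2 * ζ ^ 2)) *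
          (φ - σ ^ 2 * ψ / (σ ^ 2 + ζ ^ 2)) ^ 2)) := by
  have hexp := congrArg exp (gaussian_exponent_complete_square hσ hζ ψ φ)
  simp only [exp_add] at hexp
  have hsqrt : √(2 * π) ^ 2 = 2 * π := sq_sqrt (by positivity)
  simp only [Gzeta, gaussF, sub_zero]
  calc _ = ψ / σ ^ 2 * (φ - ψ) / (√(2 * π) ^ 2 * σ ^ 2) * (exp (-(φ - ψ) ^ 2 / (2 * ζ ^ 2)) *
          (exp (-ψ ^ 2 / (2 * σ ^ 2)) * exp (-φ ^ 2 / (2 * σ ^ 2)))) := by ring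
    _ = _ := by rw [hexp, hsqrt]; field_simp

theorem I2_inner_integral_eq (hσ : σ ≠ 0) (hζ : ζ ≠ 0) (ψ : ℝ) :
    ∫ φ, (ψ / σ ^ 2) * (φ - ψ) * Gzeta ζ (φ - ψ) * gaussF σ 0 ψ * gaussF σ 0 φ =
      -(ζ ^ 2 * √(π / ((σ ^ 2 + ζ ^ 2) / (2 * σ ^ 2 * ζ ^ 2))) / (2 * π * σ ^ 4 * (σ ^ 2 + ζ ^ 2))) *
        (ψ ^ 2 * exp (-((2 * σ ^ 2 + ζ ^ 2) / (2 * σ ^ 2 * (σ ^ 2 + ζ ^ 2))) * ψ ^ 2)) := by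
  have hT : σ ^ 2 + ζ ^ 2 ≠ 0 := by positivity
  simp_rw [I2_integrand_eq hσ hζ ψ]
  rw [integral_const_mul, integral_sub_mul_exp_neg_mul_sq_sub (by positivity)]
  field_simp
  ring

theorem I2_constant_eq (hσ : 0 < σ) (hζ : 0 < ζ) :
    -(ζ ^ 2 * √(π / ((σ ^ 2 + ζ ^ 2) / (2 * σ ^ 2 * ζ ^ 2))) / (2 * π * σ ^ 4 * (σ ^ 2 + ζ ^ 2))) *
        (√(π / ((2 * σ ^ 2 + ζ ^ 2) / (2 * σ ^ 2 * (σ ^ 2 + ζ ^ 2)))) /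
          (2 * ((2 * σ ^ 2 + ζ ^ 2) / (2 * σ ^ 2 * (σ ^ 2 + ζ ^ 2))))) =
      -ζ ^ 3 / (2 * σ ^ 2 + ζ ^ 2) ^ ((3 : ℝ) / 2) := by
  have hW : 0 < 2 * σ ^ 2 + ζ ^ 2 := by positivity
  have hsqrt : √(π / ((σ ^ 2 + ζ ^ 2) / (2 * σ ^ 2 * ζ ^ 2))) *
      √(π / ((2 * σ ^ 2 + ζ ^ 2) / (2 * σ ^ 2 * (σ ^ 2 + ζ ^ 2)))) =
        2 * π * σ ^ 2 * ζ / √(2 * σ ^ 2 + ζ ^ 2) := by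
    rw [← sqrt_mul (by positivity), ← sqrt_sq (by positivity : 0 ≤ 2 * π * σ ^ 2 * ζ),
      ← sqrt_div' _ hW.le]
    congr 1
    field_simp
  have hpow : (2 * σ ^ 2 + ζ ^ 2) ^ ((3 : ℝ) / 2) = (2 * σ ^ 2 + ζ ^ 2) * √(2 * σ ^ 2 + ζ ^ 2) := by
    rw [show (3 : ℝ) / 2 = 1 + 1 / 2 by norm_num, rpow_add hW, rpow_one, sqrt_eq_rpow]
  rw [hpow]
  calc _ = -(ζ ^ 2 / (2 * π * σ ^ 4 * (σ ^ 2 + ζ ^ 2))) * (√(π / ((σ ^ 2 + ζ ^ 2) / (2 * σ ^ 2 * ζ ^ 2))) *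
        √(π / ((2 * σ ^ 2 + ζ ^ 2) / (2 * σ ^ 2 * (σ ^ 2 + ζ ^ 2))))) /
          (2 * ((2 * σ ^ 2 + ζ ^ 2) / (2 * σ ^ 2 * (σ ^ 2 + ζ ^ 2)))) := by ring
    _ = _ := by
      rw [hsqrt]
      field_simp

end I2

theorem I2_integral (σ ζ : ℝ) (hσ : 0 < σ) (hζ : 0 < ζ) :
    (∫ ψ : ℝ, ∫ φ : ℝ,
        (ψ / σ^2) * (φ - ψ) * Gzeta ζ (φ - ψ) * gaussF σ 0 ψ * gaussF σ 0 φ) =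
      -ζ^3 / (2 * σ^2 + ζ^2) ^ ((3 : ℝ) / 2) := by
  simp_rw [I2_inner_integral_eq hσ.ne' hζ.ne']
  rw [integral_const_mul, integral_sq_mul_exp_neg_mul_sq (by positivity), I2_constant_eq hσ hζ]
end
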